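/- Let ψ be strictly convex and continuously differentiable on a convex set S ⊆ ℝ, with Bregman loss L(u, v) = ψ(u) − ψ(v) − ψ′(v)(u − v). Let f̄, y, g ∈ S, let (w₁, w₂, w₃) belong to the 3-dimensional simplex, and suppose μ = w₁ f̄ + w₂ y + w₃ g lies in the interior of S. Then for every f in the interior of S, Q(f) := w₁ L(f̄, f) + w₂ L(y, f) + w₃ L(g, f) satisfies Q(f) = Q(μ) + L(μ, f); consequently Q(f) ≥ Q(μ) with equality if and only if f = μ, so μ is the unique minimizer of Q over the interior of S. -/

import Mathlib

/-!
For weights summing to one, `u ↦ L(u, f) - L(u, μ)` is affine, so averaging it over the points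
`xᵢ` amounts to evaluating it at their weighted mean `μ`, where it equals `L(μ, f)`. This gives
`Q(f) = Q(μ) + L(μ, f)`, and strict convexity makes `L(μ, f)` positive unless `f = μ`.
-/

open Finset

def bregmanLoss (ψ ψ' : ℝ → ℝ) (u v : ℝ) : ℝ := ψ u - ψ v - ψ' v * (u - v)

namespace bregmanLoss

variable {ψ ψ' : ℝ → ℝ} {S : Set ℝ}

@[simp]
theorem self (u : ℝ) : bregmanLoss ψ ψ' u u = 0 := by
  simp [bregmanLoss]

theorem pos_of_ne (hψ : StrictConvexOn ℝ S ψ) {u v : ℝ} (hu : u ∈ S) (hv : v ∈ S)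
    (hψ' : HasDerivAt ψ (ψ' v) v) (huv : u ≠ v) : 0 < bregmanLoss ψ ψ' u v := by
  unfold bregmanLoss
  rcases huv.lt_or_gt with h | h
  · have hslope := hψ.slope_lt_of_hasDerivAt hu hv h hψ'
    rw [slope_def_field, div_lt_iff₀ (by linarith)] at hslope
    linarith
  · have hslope := hψ.lt_slope_of_hasDerivAt hv hu h hψ'
    rw [slope_def_field, lt_div_iff₀ (by linarith)] at hslope
    linarith

theorem nonneg (hψ : StrictConvexOn ℝ S ψ) {u v : ℝ} (hu : u ∈ S) (hv : v ∈ S)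
    (hψ' : HasDerivAt ψ (ψ' v) v) : 0 ≤ bregmanLoss ψ ψ' u v := by
  rcases eq_or_ne u v with rfl | huv
  · simp
  · exact (pos_of_ne hψ hu hv hψ' huv).le

theorem eq_zero_iff (hψ : StrictConvexOn ℝ S ψ) {u v : ℝ} (hu : u ∈ S)
    (hv : v ∈ S) (hψ' : HasDerivAt ψ (ψ' v) v) : bregmanLoss ψ ψ' u v = 0 ↔ u = v := by
  refine ⟨fun h ↦ ?_, fun h ↦ h ▸ self u⟩
  by_contra huv
  exact (pos_of_ne hψ hu hv hψ' huv).ne' h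

theorem sum_mul_eq_add_weighted_mean {ι : Type*} (s : Finset ι) (w x : ι → ℝ)
    (hw : ∑ i ∈ s, w i = 1) (f : ℝ) :
    ∑ i ∈ s, w i * bregmanLoss ψ ψ' (x i) f =
      ∑ i ∈ s, w i * bregmanLoss ψ ψ' (x i) (∑ j ∈ s, w j * x j) +
        bregmanLoss ψ ψ' (∑ j ∈ s, w j * x j) f := by
  set μ := ∑ j ∈ s, w j * x j
  have haffine : ∀ i ∈ s, w i * bregmanLoss ψ ψ' (x i) f =
      w i * bregmanLoss ψ ψ' (x i) μ +
        (w i * (ψ μ - ψ f + ψ' f * f - ψ' μ * μ) + (ψ' μ - ψ' f) * (w i * x i)) := by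
    intro i _
    simp only [bregmanLoss]
    ring
  rw [sum_congr rfl haffine, sum_add_distrib, sum_add_distrib, ← sum_mul, ← mul_sum, hw]
  simp only [bregmanLoss, μ]
  ring

end bregmanLoss

theorem tracking_error_minimizer_general (S : Set ℝ) (ψ ψ' : ℝ → ℝ)
    (hconv : StrictConvexOn ℝ S ψ)
    (hderiv : ∀ x ∈ S, HasDerivAt ψ (ψ' x) x)
    (L : ℝ → ℝ → ℝ) (hL : ∀ u v, L u v = ψ u - ψ v - ψ' v * (u - v))
    (fbar y g : ℝ)
    (w₁ w₂ w₃ : ℝ)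
    (hsum : w₁ + w₂ + w₃ = 1)
    (μ : ℝ) (hμ : μ = w₁ * fbar + w₂ * y + w₃ * g) (hμint : μ ∈ interior S)
    (Q : ℝ → ℝ) (hQ : ∀ f, Q f = w₁ * L fbar f + w₂ * L y f + w₃ * L g f) :
    (∀ f ∈ interior S, Q f = Q μ + L μ f) ∧
    (∀ f ∈ interior S, Q μ ≤ Q f) ∧
    (∀ f ∈ interior S, Q f = Q μ ↔ f = μ) := by
  obtain rfl : L = bregmanLoss ψ ψ' := funext₂ hL
  have hμS : μ ∈ S := interior_subset hμint
  have hdecomp (f : ℝ) : Q f = Q μ + bregmanLoss ψ ψ' μ f := by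
    have := bregmanLoss.sum_mul_eq_add_weighted_mean (ψ := ψ) (ψ' := ψ') univ
      ![w₁, w₂, w₃] ![fbar, y, g] (by simp [Fin.sum_univ_three, hsum]) f
    simpa only [Fin.sum_univ_three, Matrix.cons_val, ← hμ, ← hQ] using this
  refine ⟨fun f _ ↦ hdecomp f, fun f hf ↦ ?_, fun f hf ↦ ?_⟩
  · have hfS := interior_subset hf
    linarith [hdecomp f, bregmanLoss.nonneg hconv hμS hfS (hderiv f hfS)]
  · have hfS := interior_subset hf
    rw [hdecomp f, add_eq_left, bregmanLoss.eq_zero_iff hconv hμS hfS (hderiv f hfS), eq_comm]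

/-- **Recursive prediction as the solution of a sequential optimization problem.** For a
strictly convex, continuously differentiable `ψ` on a convex `S ⊆ ℝ` with Bregman loss
`L`, weights `(w₁,w₂,w₃)` in the 3-simplex, points `f̄, y, g ∈ S` and
`μ = w₁ f̄ + w₂ y + w₃ g` in the interior of `S`, the tracking error
`Q(f) = w₁ L(f̄,f) + w₂ L(y,f) + w₃ L(g,f)` satisfies `Q(f) = Q(μ) + L(μ,f)` for all `f`
in the interior of `S`; hence `Q(f) ≥ Q(μ)` with equality iff `f = μ`, so `μ` is the
unique minimizer of `Q` over the interior of `S`. -/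
theorem tracking_error_minimizer (S : Set ℝ) (hS : Convex ℝ S) (ψ ψ' : ℝ → ℝ)
    (hconv : StrictConvexOn ℝ S ψ)
    (hderiv : ∀ x ∈ S, HasDerivAt ψ (ψ' x) x)
    (hcont : ContinuousOn ψ' S)
    (L : ℝ → ℝ → ℝ) (hL : ∀ u v, L u v = ψ u - ψ v - ψ' v * (u - v))
    (fbar y g : ℝ) (hfbar : fbar ∈ S) (hy : y ∈ S) (hg : g ∈ S)
    (w₁ w₂ w₃ : ℝ) (hw₁ : 0 ≤ w₁) (hw₂ : 0 ≤ w₂) (hw₃ : 0 ≤ w₃)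
    (hsum : w₁ + w₂ + w₃ = 1)
    (μ : ℝ) (hμ : μ = w₁ * fbar + w₂ * y + w₃ * g) (hμint : μ ∈ interior S)
    (Q : ℝ → ℝ) (hQ : ∀ f, Q f = w₁ * L fbar f + w₂ * L y f + w₃ * L g f) :
    (∀ f ∈ interior S, Q f = Q μ + L μ f) ∧
    (∀ f ∈ interior S, Q μ ≤ Q f) ∧
    (∀ f ∈ interior S, Q f = Q μ ↔ f = μ) :=
  tracking_error_minimizer_general S ψ ψ' hconv hderiv L hL fbar y g w₁ w₂ w₃ hsum μ hμ hμint Q hQ
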